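/- Let F_{2n}(q) = Σ_{τ} q^{(ℓ(τ)-n)/2} where the sum is over fixed-point-free involutions τ in S_{2n} and ℓ(τ) is the number of inversions of τ. Then F_{2n}(q) = ∏_{k=1}^n [2k-1]_q, where [m]_q = 1 + q + ... + q^{m-1}. -/

import Mathlib

open Finset Polynomial

/-- Number of inversions of `σ`. -/
def ell {n : ℕ} (σ : Equiv.Perm (Fin n)) : ℕ :=
  (Finset.univ.filter (fun p : Fin n × Fin n => p.1 < p.2 ∧ σ p.2 < σ p.1)).card

/-- The `q`-integer `[m]_q = 1 + q + ⋯ + q^{m-1}`. -/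
noncomputable def qint (m : ℕ) : Polynomial ℤ := ∑ i ∈ Finset.range m, X ^ i

/-!
Every fixed-point-free involution `τ` of `Fin (m + 2)` arises uniquely by pairing the last point
with some `j ≤ m` and placing a fixed-point-free involution `σ` of `Fin m` order-preservingly on
the remaining points. This creates exactly `2 (m - j) + 1` new inversions, so for `m = 2n` the
exponent `(ℓ - n) / 2` grows by `2n - j`, and summing over `j` produces the factor `[2n + 1]_q`.
-/

lemma Equiv.Perm.exists_viaFintypeEmbedding_eq {α β : Type*} [Fintype α] [DecidableEq α]
    [DecidableEq β] (f : α ↪ β) {ρ : Equiv.Perm β} (h : ∀ b ∉ Set.range f, ρ b = b) :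
    ∃ σ : Equiv.Perm α, σ.viaFintypeEmbedding f = ρ := by
  have hρ (b : β) : ρ b ∈ Set.range f ↔ b ∈ Set.range f := by
    by_cases hb : b ∈ Set.range f
    · refine iff_of_true (by_contra fun hρb => hρb ?_) hb
      rwa [ρ.injective (h _ hρb)]
    · rw [h b hb]
  refine ⟨f.toEquivRange.symm.permCongr (ρ.subtypePerm hρ), Equiv.ext fun b => ?_⟩
  by_cases hb : b ∈ Set.range f
  · obtain ⟨a, rfl⟩ := hb
    rw [Equiv.Perm.viaFintypeEmbedding_apply_image]
    exact congrArg Subtype.val (f.toEquivRange.apply_symm_apply _)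
  · rw [Equiv.Perm.viaFintypeEmbedding_apply_notMem_range _ _ hb, h b hb]

section InsertPair

variable {m : ℕ}

def Fin.complPairEmb (j : Fin (m + 1)) : Fin m ↪o Fin (m + 2) :=
  (Fin.succAboveOrderEmb j).trans Fin.castSuccOrderEmb

lemma Fin.complPairEmb_apply (j : Fin (m + 1)) (k : Fin m) :
    Fin.complPairEmb j k = (j.succAbove k).castSucc := rfl

lemma Fin.complPairEmb_ne_castSucc (j : Fin (m + 1)) (k : Fin m) :
    Fin.complPairEmb j k ≠ j.castSucc :=
  fun h => Fin.succAbove_ne j k (Fin.castSucc_injective _ h)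

lemma Fin.complPairEmb_lt_last (j : Fin (m + 1)) (k : Fin m) :
    Fin.complPairEmb j k < Fin.last (m + 1) :=
  Fin.castSucc_lt_last _

lemma Fin.sum_univ_complPair {M : Type*} [AddCommMonoid M] (j : Fin (m + 1))
    (f : Fin (m + 2) → M) :
    ∑ x, f x = f (Fin.last (m + 1)) + f j.castSucc + ∑ k, f (Fin.complPairEmb j k) := by
  rw [Fin.sum_univ_castSucc, Fin.sum_univ_succAbove _ j]
  simp only [Fin.complPairEmb_apply]
  abel

lemma Fin.mem_range_complPairEmb {j : Fin (m + 1)} {x : Fin (m + 2)} :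
    x ∈ Set.range (Fin.complPairEmb j) ↔ x ≠ Fin.last (m + 1) ∧ x ≠ j.castSucc := by
  refine ⟨?_, fun ⟨hlast, hj⟩ => ?_⟩
  · rintro ⟨k, rfl⟩
    exact ⟨(Fin.complPairEmb_lt_last j k).ne, Fin.complPairEmb_ne_castSucc j k⟩
  · obtain ⟨y, rfl⟩ := Fin.exists_castSucc_eq.mpr hlast
    obtain ⟨k, rfl⟩ := Fin.exists_succAbove_eq (fun h => hj (congrArg Fin.castSucc h))
    exact ⟨k, rfl⟩

@[elab_as_elim]
lemma Fin.complPair_cases (j : Fin (m + 1)) {P : Fin (m + 2) → Prop}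
    (last : P (Fin.last (m + 1))) (castSucc : P j.castSucc)
    (complPairEmb : ∀ k, P (Fin.complPairEmb j k)) (x : Fin (m + 2)) : P x := by
  by_cases hlast : x = Fin.last (m + 1)
  · exact hlast ▸ last
  by_cases hj : x = j.castSucc
  · exact hj ▸ castSucc
  obtain ⟨k, rfl⟩ := Fin.mem_range_complPairEmb.mpr ⟨hlast, hj⟩
  exact complPairEmb k

def insertPair (j : Fin (m + 1)) (σ : Equiv.Perm (Fin m)) : Equiv.Perm (Fin (m + 2)) :=
  Equiv.swap (Fin.last (m + 1)) j.castSucc *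
    σ.viaFintypeEmbedding (Fin.complPairEmb j).toEmbedding

variable (j : Fin (m + 1)) (σ : Equiv.Perm (Fin m))

@[simp]
lemma insertPair_complPairEmb (k : Fin m) :
    insertPair j σ (Fin.complPairEmb j k) = Fin.complPairEmb j (σ k) := by
  rw [insertPair, Equiv.Perm.mul_apply]
  refine (congrArg _ (σ.viaFintypeEmbedding_apply_image _ k)).trans ?_
  exact Equiv.swap_apply_of_ne_of_ne (Fin.complPairEmb_lt_last j _).ne
    (Fin.complPairEmb_ne_castSucc j _)

@[simp]
lemma insertPair_last : insertPair j σ (Fin.last (m + 1)) = j.castSucc := by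
  rw [insertPair, Equiv.Perm.mul_apply, Equiv.Perm.viaFintypeEmbedding_apply_notMem_range,
    Equiv.swap_apply_left]
  rintro ⟨k, hk⟩
  exact (Fin.complPairEmb_lt_last j k).ne hk

@[simp]
lemma insertPair_castSucc : insertPair j σ j.castSucc = Fin.last (m + 1) := by
  rw [insertPair, Equiv.Perm.mul_apply, Equiv.Perm.viaFintypeEmbedding_apply_notMem_range,
    Equiv.swap_apply_right]
  rintro ⟨k, hk⟩
  exact Fin.complPairEmb_ne_castSucc j k hk

end InsertPair

lemma ell_eq_sum {m : ℕ} (σ : Equiv.Perm (Fin m)) :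
    ell σ = ∑ x, ∑ y, if x < y ∧ σ y < σ x then 1 else 0 := by
  rw [ell, Finset.card_filter, Fintype.sum_prod_type]

lemma ell_insertPair {m : ℕ} (j : Fin (m + 1)) (σ : Equiv.Perm (Fin m)) :
    ell (insertPair j σ) = ell σ + 2 * (m - j) + 1 := by
  -- the new inversions are `(j, y)` for `j < y < last`, `(x, last)` for `j < τ x`, and `(j, last)`
  have hIoi : ∑ k, (if j.castSucc < Fin.complPairEmb j k then 1 else 0) = m - j := by
    have h := Fin.sum_univ_complPair j (fun x => if j.castSucc < x then 1 else 0)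
    rw [← Finset.card_filter, Finset.filter_lt_eq_Ioi, Fin.card_Ioi] at h
    simp only [Fin.castSucc_lt_last, lt_irrefl, if_true, if_false, add_zero, Fin.val_castSucc] at h
    omega
  have hσ : ∑ k, (if j.castSucc < Fin.complPairEmb j (σ k) then 1 else 0) = m - j := by
    rw [Equiv.sum_comp σ (fun k => if j.castSucc < Fin.complPairEmb j k then 1 else 0), hIoi]
  simp only [ell_eq_sum, Fin.sum_univ_complPair j, insertPair_last, insertPair_castSucc,
    insertPair_complPairEmb, OrderEmbedding.lt_iff_lt]
  have not_last_lt (x : Fin (m + 2)) : ¬ Fin.last (m + 1) < x := (Fin.le_last x).not_gt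
  simp only [not_last_lt, Fin.complPairEmb_lt_last, Fin.castSucc_lt_last, lt_irrefl, and_self,
    false_and, and_false, true_and, and_true, if_true, if_false, Finset.sum_const_zero, add_zero,
    zero_add, Finset.sum_add_distrib, hσ, hIoi]
  omega

def fpfInvolutions (m : ℕ) : Finset (Equiv.Perm (Fin m)) :=
  Finset.univ.filter fun τ => τ * τ = 1 ∧ ∀ i, τ i ≠ i

lemma mem_fpfInvolutions {m : ℕ} {τ : Equiv.Perm (Fin m)} :
    τ ∈ fpfInvolutions m ↔ (∀ i, τ (τ i) = i) ∧ ∀ i, τ i ≠ i := by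
  simp [fpfInvolutions, Equiv.Perm.ext_iff]

section InsertPairBijection

variable {m : ℕ}

lemma insertPair_mem_fpfInvolutions (j : Fin (m + 1)) {σ : Equiv.Perm (Fin m)}
    (hσ : σ ∈ fpfInvolutions m) : insertPair j σ ∈ fpfInvolutions (m + 2) := by
  obtain ⟨hinv, hfree⟩ := mem_fpfInvolutions.mp hσ
  refine mem_fpfInvolutions.mpr ⟨fun x => ?_, fun x => ?_⟩
  · induction x using Fin.complPair_cases j <;> simp [hinv]
  · induction x using Fin.complPair_cases j <;> simp [hfree, (Fin.castSucc_lt_last j).ne']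

lemma insertPair_injective2 : Function.Injective2 (insertPair (m := m)) := by
  intro j j' σ σ' h
  obtain rfl : j = j' := by
    simpa using congrArg (· (Fin.last (m + 1))) h
  refine ⟨rfl, Equiv.ext fun k => (Fin.complPairEmb j).injective ?_⟩
  simpa using congrArg (· (Fin.complPairEmb j k)) h

lemma exists_insertPair_eq {τ : Equiv.Perm (Fin (m + 2))} (hτ : τ ∈ fpfInvolutions (m + 2)) :
    ∃ σ ∈ fpfInvolutions m, ∃ j, insertPair j σ = τ := by
  obtain ⟨hinv, hfree⟩ := mem_fpfInvolutions.mp hτ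
  set j := (τ (Fin.last (m + 1))).castPred (hfree _)
  have hj : j.castSucc = τ (Fin.last (m + 1)) := Fin.castSucc_castPred _ _
  have hρ : ∀ x ∉ Set.range (Fin.complPairEmb j).toEmbedding,
      (Equiv.swap (Fin.last (m + 1)) j.castSucc * τ) x = x := by
    intro x hx
    change x ∉ Set.range (Fin.complPairEmb j) at hx
    rw [Fin.mem_range_complPairEmb, not_and_or, not_not, not_not] at hx
    obtain rfl | rfl := hx
    · rw [Equiv.Perm.mul_apply, ← hj, Equiv.swap_apply_right]
    · rw [Equiv.Perm.mul_apply, hj, hinv, Equiv.swap_apply_left]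
  obtain ⟨σ, hσ⟩ := Equiv.Perm.exists_viaFintypeEmbedding_eq _ hρ
  have hτσ : insertPair j σ = τ := by
    rw [insertPair, hσ, Equiv.swap_mul_self_mul]
  refine ⟨σ, mem_fpfInvolutions.mpr ⟨fun k => (Fin.complPairEmb j).injective ?_, fun k hk => ?_⟩,
    j, hτσ⟩
  · have := hinv (Fin.complPairEmb j k)
    rwa [← hτσ, insertPair_complPairEmb, insertPair_complPairEmb] at this
  · refine hfree (Fin.complPairEmb j k) ?_
    rw [← hτσ, insertPair_complPairEmb, hk]

lemma sum_fpfInvolutions_add_two {M : Type*} [AddCommMonoid M]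
    (f : Equiv.Perm (Fin (m + 2)) → M) :
    ∑ τ ∈ fpfInvolutions (m + 2), f τ = ∑ σ ∈ fpfInvolutions m, ∑ j, f (insertPair j σ) := by
  rw [← Finset.sum_product']
  refine (Finset.sum_bij (fun p _ => insertPair p.2 p.1) ?_ ?_ ?_ fun _ _ => rfl).symm
  · intro p hp
    exact insertPair_mem_fpfInvolutions p.2 (Finset.mem_product.mp hp).1
  · intro p _ p' _ h
    obtain ⟨hj, hσ⟩ := insertPair_injective2 h
    exact Prod.ext hσ hj
  · intro τ hτ
    obtain ⟨σ, hσ, j, rfl⟩ := exists_insertPair_eq hτ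
    exact ⟨(σ, j), Finset.mem_product.mpr ⟨hσ, Finset.mem_univ j⟩, rfl⟩

end InsertPairBijection

lemma le_ell_of_mem_fpfInvolutions {n : ℕ} {τ : Equiv.Perm (Fin (2 * n))}
    (hτ : τ ∈ fpfInvolutions (2 * n)) : n ≤ ell τ := by
  induction n with
  | zero => exact Nat.zero_le _
  | succ n ih =>
    obtain ⟨σ, hσ, j, rfl⟩ := exists_insertPair_eq (m := 2 * n) hτ
    rw [ell_insertPair]
    have := ih hσ
    omega

lemma qint_succ (m : ℕ) : qint (m + 1) = ∑ j : Fin (m + 1), (X : ℤ[X]) ^ (m - j) := by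
  rw [Fin.sum_univ_eq_sum_range (fun i => (X : ℤ[X]) ^ (m - i)), qint]
  exact (Finset.sum_range_reflect (fun i => (X : ℤ[X]) ^ i) (m + 1)).symm

/-- `Σ_τ q^{(ℓ(τ)-n)/2} = ∏_{k=1}^n [2k-1]_q`, summing over fixed-point-free
involutions `τ ∈ S_{2n}`. -/
theorem fpf_rank_generating_function (n : ℕ) :
    ∑ τ ∈ Finset.univ.filter
        (fun τ : Equiv.Perm (Fin (2 * n)) => τ * τ = 1 ∧ ∀ i, τ i ≠ i),
      (X : Polynomial ℤ) ^ ((ell τ - n) / 2)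
    = ∏ k ∈ Finset.range n, qint (2 * k + 1) := by
  change ∑ τ ∈ fpfInvolutions (2 * n), (X : ℤ[X]) ^ ((ell τ - n) / 2) = _
  induction n with
  | zero => simp [fpfInvolutions, Finset.univ_unique, ell, Finset.filter_eq']
  | succ n ih =>
    calc ∑ τ ∈ fpfInvolutions (2 * n + 2), (X : ℤ[X]) ^ ((ell τ - (n + 1)) / 2)
        = ∑ σ ∈ fpfInvolutions (2 * n), ∑ j : Fin (2 * n + 1),
            X ^ ((ell σ - n) / 2) * X ^ (2 * n - j) := by
          rw [sum_fpfInvolutions_add_two]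
          refine Finset.sum_congr rfl fun σ hσ => Finset.sum_congr rfl fun j _ => ?_
          -- `n ≤ ell σ` makes the truncated subtractions in the exponents agree
          have := le_ell_of_mem_fpfInvolutions hσ
          rw [← pow_add, ell_insertPair]
          congr 1
          omega
      _ = (∑ σ ∈ fpfInvolutions (2 * n), X ^ ((ell σ - n) / 2)) * qint (2 * n + 1) := by
          simp_rw [← Finset.mul_sum, Finset.sum_mul, qint_succ]
      _ = ∏ k ∈ Finset.range (n + 1), qint (2 * k + 1) := by
          rw [ih, Finset.prod_range_succ]
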